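/- Crossedge Independence Lemma: Let G be a 3-connected finite simple graph and 𝒯 a G-tangle of order 4. Let (Y,S,Z), (Y₁,S₁,Z₁), (Y₂,S₂,Z₂) ∈ 𝒯_min be pairwise distinct such that (Y,S,Z) crosses both (Y₁,S₁,Z₁) and (Y₂,S₂,Z₂), and for i = 1, 2 let sᵢsᵢ' be the crossedge of (Y,S,Z) and (Yᵢ,Sᵢ,Zᵢ), where S ∩ Yᵢ = {sᵢ} and Sᵢ ∩ Y = {sᵢ'}. Then: (1) S is an independent set of G; (2) if (Y,S,Z) is degenerate, then s₁, s₂, s₁' are mutually distinct and s₁' = s₂'; (3) if (Y,S,Z) is non-degenerate, then s₁, s₂, s₁', s₂' are mutually distinct. -/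

import Mathlib

variable {V : Type*} {W : Type*}

/-- A separation (Y,S,Z) of a graph: pairwise disjoint sets covering the vertex set,
with no edge between Y and Z. -/
def IsSeparation (G : SimpleGraph V) (Y S Z : Set V) : Prop :=
  Disjoint Y S ∧ Disjoint Y Z ∧ Disjoint S Z ∧ Y ∪ S ∪ Z = Set.univ ∧
    ∀ y ∈ Y, ∀ z ∈ Z, ¬ G.Adj y z

/-- `G` is `k`-connected: more than `k` vertices and no proper separation of order `< k`. -/
def KConnected (k : ℕ) (G : SimpleGraph V) : Prop :=
  k < Nat.card V ∧
    ∀ Y S Z : Set V, IsSeparation G Y S Z → Y.Nonempty → Z.Nonempty → k ≤ S.ncard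

/-- `G` is quasi-4-connected. -/
def Quasi4Connected (G : SimpleGraph V) : Prop :=
  KConnected 3 G ∧
    ∀ Y S Z : Set V, IsSeparation G Y S Z → S.ncard = 3 → Y.ncard ≤ 1 ∨ Z.ncard ≤ 1

/-- `T` is a `G`-tangle of order `k`. -/
def IsTangle (G : SimpleGraph V) (k : ℕ) (T : Set (Set V × Set V × Set V)) : Prop :=
  (∀ p ∈ T, IsSeparation G p.1 p.2.1 p.2.2 ∧ p.2.1.ncard < k) ∧
  (∀ Y S Z : Set V, IsSeparation G Y S Z → S.ncard < k →
    (Y, S, Z) ∈ T ∨ (Z, S, Y) ∈ T) ∧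
  (∀ p₁ ∈ T, ∀ p₂ ∈ T, ∀ p₃ ∈ T,
    (p₁.2.2 ∩ p₂.2.2 ∩ p₃.2.2 : Set V).Nonempty ∨
      ∃ u v : V, G.Adj u v ∧ (u ∈ p₁.2.2 ∨ v ∈ p₁.2.2) ∧
        (u ∈ p₂.2.2 ∨ v ∈ p₂.2.2) ∧ (u ∈ p₃.2.2 ∨ v ∈ p₃.2.2)) ∧
  (∀ p ∈ T, (p.2.2 : Set V).Nonempty)

/-- The order `⪯` on separations: (Y,S,Z) ⪯ (Y',S',Z') iff S ∪ Z ⊊ S' ∪ Z', or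
S ∪ Z = S' ∪ Z' and S ⊆ S'. -/
def SepLE (p q : Set V × Set V × Set V) : Prop :=
  p.2.1 ∪ p.2.2 ⊂ q.2.1 ∪ q.2.2 ∨
    (p.2.1 ∪ p.2.2 = q.2.1 ∪ q.2.2 ∧ p.2.1 ⊆ q.2.1)

/-- `p` is a `⪯`-minimal element of `T`. -/
def IsMinimalIn (T : Set (Set V × Set V × Set V)) (p : Set V × Set V × Set V) : Prop :=
  p ∈ T ∧ ∀ q ∈ T, SepLE q p → q = p

/-- Two separations are orthogonal. (They cross if they are not orthogonal.) -/
def SepOrthogonal (p q : Set V × Set V × Set V) : Prop :=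
  (p.1 ∪ p.2.1) ∩ (q.1 ∪ q.2.1) ⊆ p.2.1 ∩ q.2.1

/-- A separation (Y,S,Z) is degenerate: |Y| = 1 and S is an independent set. -/
def Degenerate (G : SimpleGraph V) (Y S Z : Set V) : Prop :=
  Y.ncard = 1 ∧ ∀ u ∈ S, ∀ v ∈ S, ¬ G.Adj u v

/-- The neighbourhood N(X): vertices outside X adjacent to a vertex of X. -/
def Nbhd (G : SimpleGraph V) (X : Set V) : Set V :=
  {v | v ∉ X ∧ ∃ u ∈ X, G.Adj u v}

/-- `C` is (the vertex set of) a connected component of `G − X`. -/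
def IsCompOutside (G : SimpleGraph V) (X C : Set V) : Prop :=
  C ⊆ Xᶜ ∧ (G.induce C).Connected ∧ ∀ u ∈ C, ∀ v : V, v ∉ X → G.Adj u v → v ∈ C

/-- The torso `G⟦X⟧` of `X` in `G`. -/
def torso (G : SimpleGraph V) (X : Set V) : SimpleGraph X where
  Adj u v := u ≠ v ∧ (G.Adj (u : V) (v : V) ∨
    ∃ C : Set V, IsCompOutside G X C ∧ (u : V) ∈ Nbhd G C ∧ (v : V) ∈ Nbhd G C)
  symm := by
    constructor
    rintro u v ⟨hne, h | ⟨C, hC, hu, hv⟩⟩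
    · exact ⟨hne.symm, Or.inl h.symm⟩
    · exact ⟨hne.symm, Or.inr ⟨C, hC, hv, hu⟩⟩
  loopless := by
    constructor
    intro u h
    exact h.1 rfl

/-- `H` is a minor of `G`. -/
def IsMinor (H : SimpleGraph W) (G : SimpleGraph V) : Prop :=
  ∃ M : W → Set V,
    (∀ w : W, (G.induce (M w)).Connected) ∧
    (Pairwise fun w w' : W => Disjoint (M w) (M w')) ∧
    ∀ w w' : W, H.Adj w w' → ∃ u ∈ M w, ∃ v ∈ M w', G.Adj u v

/-- `M` is a faithful model of the graph `H` (with vertex set `X ⊆ V(G)`) in `G`. -/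
def FaithfulModel (G : SimpleGraph V) (X : Set V) (H : SimpleGraph X)
    (M : X → Set V) : Prop :=
  (∀ w : X, (w : V) ∈ M w) ∧
  (∀ w : X, (G.induce (M w)).Connected) ∧
  (Pairwise fun w w' : X => Disjoint (M w) (M w')) ∧
  ∀ w w' : X, H.Adj w w' → ∃ u ∈ M w, ∃ v ∈ M w', G.Adj u v

/-- `H` (a graph with vertex set `X ⊆ V(G)`) is a faithful minor of `G`. -/
def IsFaithfulMinor (G : SimpleGraph V) (X : Set V) (H : SimpleGraph X) : Prop :=
  ∃ M : X → Set V, FaithfulModel G X H M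

/-- The projection of a separation of `G` to a minor with model `M`. -/
def projSep {X : Set V} (M : X → Set V) (p : Set V × Set V × Set V) :
    Set X × Set X × Set X :=
  ({w : X | M w ⊆ p.1}, {w : X | (M w ∩ p.2.1).Nonempty}, {w : X | M w ⊆ p.2.2})

/-- The graph TH₊₃: vertices 0,1,2,3 are v₁,v₂,v₃,v₄ (pairwise adjacent); 4,5,6 are
w₁,w₂,w₃ with w₁ ~ v₁,v₂,v₃, w₂ ~ v₁,v₂,v₄, w₃ ~ v₁,v₃,v₄. -/
def TH3 : SimpleGraph (Fin 7) :=
  SimpleGraph.fromRel (fun u v =>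
    (u.val < 4 ∧ v.val < 4) ∨
    (u.val = 4 ∧ (v.val = 0 ∨ v.val = 1 ∨ v.val = 2)) ∨
    (u.val = 5 ∧ (v.val = 0 ∨ v.val = 1 ∨ v.val = 3)) ∨
    (u.val = 6 ∧ (v.val = 0 ∨ v.val = 2 ∨ v.val = 3)))

/-- The graph TR₊₃: vertices 0,1,2 are v₁,v₂,v₃ (pairwise adjacent); 3,4,5 are
w₁,w₂,w₃, each adjacent to each of v₁,v₂,v₃. -/
def TR3 : SimpleGraph (Fin 6) :=
  SimpleGraph.fromRel (fun u v =>
    (u.val < 3 ∧ v.val < 3) ∨ (3 ≤ u.val ∧ v.val < 3))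

/-- A graph is exceptional if it embeds (injectively, preserving adjacency)
into TH₊₃ or into TR₊₃. -/
def Exceptional (H : SimpleGraph W) : Prop :=
  (∃ f : W → Fin 7, Function.Injective f ∧ ∀ u v : W, H.Adj u v → TH3.Adj (f u) (f v)) ∨
  (∃ f : W → Fin 6, Function.Injective f ∧ ∀ u v : W, H.Adj u v → TR3.Adj (f u) (f v))

/-- `X` is a `k`-inseparable set of `G`. -/
def KInseparable (G : SimpleGraph V) (k : ℕ) (X : Set V) : Prop :=
  k < X.ncard ∧
    ¬ ∃ Y S Z : Set V, IsSeparation G Y S Z ∧ S.ncard ≤ k ∧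
      (X ∩ Y).Nonempty ∧ (X ∩ Z).Nonempty

/-- A triconnected region: a maximal 2-inseparable set of size ≥ 4. -/
def TriconnectedRegion (G : SimpleGraph V) (R : Set V) : Prop :=
  KInseparable G 2 R ∧ 4 ≤ R.ncard ∧ ∀ R' : Set V, R ⊂ R' → ¬ KInseparable G 2 R'

/-- `H` is a topological subgraph of `G`. -/
def IsTopologicalSubgraph (H : SimpleGraph W) (G : SimpleGraph V) : Prop :=
  ∃ (φ : W → V) (P : ∀ u v : W, H.Adj u v → G.Walk (φ u) (φ v)),
    Function.Injective φ ∧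
    (∀ u v (h : H.Adj u v), (P u v h).IsPath) ∧
    (∀ u v (h : H.Adj u v), P u v h = (P v u h.symm).reverse) ∧
    (∀ u v (h : H.Adj u v), ∀ x ∈ (P u v h).support,
      x ∈ Set.range φ → x = φ u ∨ x = φ v) ∧
    (∀ u v (h : H.Adj u v), ∀ u' v' (h' : H.Adj u' v'), s(u, v) ≠ s(u', v') →
      ∀ x ∈ (P u v h).support, x ∈ (P u' v' h').support →
        (x = φ u ∨ x = φ v) ∧ (x = φ u' ∨ x = φ v'))

/-- A quasi-4-connected region of a 3-connected graph. -/
def Quasi4Region (G : SimpleGraph V) (R : Set V) : Prop :=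
  IsFaithfulMinor G R (torso G R) ∧ Quasi4Connected (torso G R) ∧
    ∀ C : Set V, IsCompOutside G R C → (Nbhd G C).ncard = 3

/-- A split vertex of a separation (Y₀,S₀,Z₀). -/
def SplitVertex (G : SimpleGraph V) (S₀ Z₀ : Set V) (z : V) : Prop :=
  z ∈ Z₀ ∧ ∀ C : Set V, IsCompOutside G (S₀ ∪ {z}) C → (Nbhd G C).ncard = 3

/-- The graph obtained from `G` by contracting the edge `s₁s₂` onto `s₁`. -/
def contractEdge (G : SimpleGraph V) (s₁ s₂ : V) : SimpleGraph ({s₂}ᶜ : Set V) where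
  Adj u v := u ≠ v ∧ (G.Adj (u : V) (v : V) ∨
    ((u : V) = s₁ ∧ G.Adj (v : V) s₂) ∨ ((v : V) = s₁ ∧ G.Adj (u : V) s₂))
  symm := by
    constructor
    rintro u v ⟨hne, h | h | h⟩
    · exact ⟨hne.symm, Or.inl h.symm⟩
    · exact ⟨hne.symm, Or.inr (Or.inr h)⟩
    · exact ⟨hne.symm, Or.inr (Or.inl h)⟩
  loopless := by
    constructor
    intro u h
    exact h.1 rfl

/-- `s t` are the endvertices of a crossedge of two crossing non-degenerate minimal
separations of the tangle `T`, with `s ∈ S₁` and `t ∈ S₂`. -/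
def IsNondegCrossedge (G : SimpleGraph V) (T : Set (Set V × Set V × Set V))
    (s t : V) : Prop :=
  ∃ p q : Set V × Set V × Set V,
    IsMinimalIn T p ∧ IsMinimalIn T q ∧
    ¬ Degenerate G p.1 p.2.1 p.2.2 ∧ ¬ Degenerate G q.1 q.2.1 q.2.2 ∧
    ¬ SepOrthogonal p q ∧ G.Adj s t ∧ p.2.1 ∩ q.1 = {s} ∧ q.2.1 ∩ p.1 = {t}


/-!
The argument rests on submodularity of corners: for two separations, the separators of the
corners `Y₁ ∩ Y₂` and `Z₁ ∩ Z₂` have total size `|S₁| + |S₂|`. If `(Y₁,S₁,Z₁)` is `⪯`-minimal in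
the tangle and `Y₂ ⊄ Y₁`, the corner `(Y₁ ∪ Y₂, _, Z₁ ∩ Z₂)` cannot have order `< 4`: it would lie
in the tangle and be strictly `⪯`-smaller. Hence the opposite corner at `Y₁ ∩ Y₂` has order at
most `2`, which with 3-connectivity makes the `Y`-sides of distinct minimal separations disjoint
and `S` disjoint from `S₁` and `S₂`, since that corner contains `s₁`, `s₁'` and `S ∩ S₁`.
Then `S \ {sᵢ} ⊆ Zᵢ`, so no edge of `S` meets `s₁` or `s₂`, and `S` is independent. In the
non-degenerate case, `s₁' = s₂'` would make `{s₁'} ∪ (S \ {s₁, s₂})` a separator of order `2`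
cutting `Y \ {s₁'}` off from `Z`.
-/

open Set

section Separations

variable {G : SimpleGraph V} {Y S Z Y₁ S₁ Z₁ Y₂ S₂ Z₂ : Set V}

theorem IsSeparation.mem_cases (h : IsSeparation G Y S Z) (x : V) :
    x ∈ Y ∧ x ∉ S ∧ x ∉ Z ∨ x ∉ Y ∧ x ∈ S ∧ x ∉ Z ∨ x ∉ Y ∧ x ∉ S ∧ x ∈ Z := by
  have hx : x ∈ Y ∪ S ∪ Z := h.2.2.2.1 ▸ mem_univ x
  have hYS : x ∈ Y → x ∉ S := fun hx => disjoint_left.mp h.1 hx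
  have hYZ : x ∈ Y → x ∉ Z := fun hx => disjoint_left.mp h.2.1 hx
  have hSZ : x ∈ S → x ∉ Z := fun hx => disjoint_left.mp h.2.2.1 hx
  simp only [mem_union] at hx
  tauto

theorem IsSeparation.mem_right (h : IsSeparation G Y S Z) {x : V} (hY : x ∉ Y) (hS : x ∉ S) :
    x ∈ Z := by
  rcases h.mem_cases x with h | h | h <;> tauto

theorem IsSeparation.symm (h : IsSeparation G Y S Z) : IsSeparation G Z S Y := by
  refine ⟨h.2.2.1.symm, h.2.1.symm, h.1.symm, ?_, fun z hz y hy e => h.2.2.2.2 y hy z hz e.symm⟩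
  rw [← h.2.2.2.1]
  ext x
  simp only [mem_union]
  tauto

theorem IsSeparation.right_unique (h₁ : IsSeparation G Y S Z₁) (h₂ : IsSeparation G Y S Z₂) :
    Z₁ = Z₂ := by
  ext x
  rcases h₁.mem_cases x with h | h | h <;> rcases h₂.mem_cases x with h' | h' | h' <;> tauto

theorem isSeparation_of_forall_adj {A B : Set V} (hAB : Disjoint A B)
    (hadj : ∀ a ∈ A, ∀ c, G.Adj a c → c ∈ A ∪ B) : IsSeparation G A B (A ∪ B)ᶜ := by
  refine ⟨hAB, disjoint_compl_right.mono_right (compl_subset_compl.mpr subset_union_left),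
    disjoint_compl_right.mono_right (compl_subset_compl.mpr subset_union_right),
    by rw [union_compl_self], fun a ha c hc e => hc (hadj a ha c e)⟩

/-- The separator of the corner `Y₁ ∩ Y₂` of two separations; applied to the `Z`-sides it is
the separator of the opposite corner `Z₁ ∩ Z₂`. -/
def cornerBoundary (Y₁ S₁ Y₂ S₂ : Set V) : Set V := S₁ ∩ Y₂ ∪ S₁ ∩ S₂ ∪ S₂ ∩ Y₁

theorem cornerBoundary_comm : cornerBoundary Y₁ S₁ Y₂ S₂ = cornerBoundary Y₂ S₂ Y₁ S₁ := by
  ext x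
  simp only [cornerBoundary, mem_union, mem_inter_iff]
  tauto

theorem IsSeparation.corner (h₁ : IsSeparation G Y₁ S₁ Z₁) (h₂ : IsSeparation G Y₂ S₂ Z₂) :
    IsSeparation G (Y₁ ∩ Y₂) (cornerBoundary Y₁ S₁ Y₂ S₂) (Z₁ ∪ Z₂) := by
  refine ⟨?_, ?_, ?_, ?_, ?_⟩
  rotate_right
  · rintro y ⟨hy₁, hy₂⟩ z (hz | hz) e
    exacts [h₁.2.2.2.2 y hy₁ z hz e, h₂.2.2.2.2 y hy₂ z hz e]
  all_goals
    first
    | refine disjoint_left.mpr fun x => ?_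
    | refine eq_univ_of_forall fun x => ?_
    have := h₁.mem_cases x
    have := h₂.mem_cases x
    simp only [cornerBoundary, mem_union, mem_inter_iff]
    tauto

theorem ncard_cornerBoundary_add_ncard_cornerBoundary [Finite V]
    (h₁ : IsSeparation G Y₁ S₁ Z₁) (h₂ : IsSeparation G Y₂ S₂ Z₂) :
    (cornerBoundary Y₁ S₁ Y₂ S₂).ncard + (cornerBoundary Z₁ S₁ Z₂ S₂).ncard =
      S₁.ncard + S₂.ncard := by
  rw [← ncard_union_add_ncard_inter, ← ncard_union_add_ncard_inter S₁]
  congr 2 <;> ext x <;> have := h₁.mem_cases x <;> have := h₂.mem_cases x <;>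
    simp only [cornerBoundary, mem_union, mem_inter_iff] <;> tauto

theorem IsSeparation.not_adj_of_inter_eq_singleton (sep₁ : IsSeparation G Y₁ S₁ Z₁)
    {s₁ : V} (hs₁ : S ∩ Y₁ = {s₁}) (hSS₁ : Disjoint S S₁) {v : V} (hv : v ∈ S) : ¬ G.Adj s₁ v := by
  intro e
  obtain ⟨⟨-, hs₁Y₁⟩, hunique⟩ := eq_singleton_iff_unique_mem.mp hs₁
  have hvY₁ : v ∉ Y₁ := fun hvY₁ => e.ne (hunique v ⟨hv, hvY₁⟩).symm
  exact sep₁.2.2.2.2 s₁ hs₁Y₁ v (sep₁.mem_right hvY₁ (disjoint_left.mp hSS₁ hv)) e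

end Separations

section Tangles

variable {G : SimpleGraph V} {T : Set (Set V × Set V × Set V)} {k : ℕ}
  {Y S Z Y₁ S₁ Z₁ Y₂ S₂ Z₂ : Set V}

theorem IsTangle.ncard_eq (hT : IsTangle G (k + 1) T) (hk : KConnected k G) (hp : (Y, S, Z) ∈ T)
    (hY : Y.Nonempty) : S.ncard = k :=
  le_antisymm (Nat.lt_succ_iff.mp (hT.1 _ hp).2) (hk.2 _ _ _ (hT.1 _ hp).1 hY (hT.2.2.2 _ hp))

/-- Otherwise the reversed corner, together with the two separations, would violate (T2):
an edge meeting `Yᵢ` and `Zᵢ` crosses the `i`-th separation. -/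
theorem IsTangle.corner_mem (hT : IsTangle G k T) (h₁ : (Y₁, S₁, Z₁) ∈ T)
    (h₂ : (Y₂, S₂, Z₂) ∈ T) (hk : (cornerBoundary Z₁ S₁ Z₂ S₂).ncard < k) :
    (Y₁ ∪ Y₂, cornerBoundary Z₁ S₁ Z₂ S₂, Z₁ ∩ Z₂) ∈ T := by
  have sep₁ : IsSeparation G Y₁ S₁ Z₁ := (hT.1 _ h₁).1
  have sep₂ : IsSeparation G Y₂ S₂ Z₂ := (hT.1 _ h₂).1
  refine (hT.2.1 _ _ _ (sep₁.symm.corner sep₂.symm).symm hk).resolve_right fun hrev => ?_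
  have hedge : ∀ u v, G.Adj u v → (u ∈ Z₁ ∨ v ∈ Z₁) → (u ∈ Z₂ ∨ v ∈ Z₂) → u ∉ Y₁ ∪ Y₂ := by
    rintro u v e hZ₁ hZ₂ (hu | hu)
    · exact sep₁.2.2.2.2 u hu v (hZ₁.resolve_left (disjoint_left.mp sep₁.2.1 hu)) e
    · exact sep₂.2.2.2.2 u hu v (hZ₂.resolve_left (disjoint_left.mp sep₂.2.1 hu)) e
  rcases hT.2.2.1 _ h₁ _ h₂ _ hrev with ⟨x, ⟨hx₁, hx₂⟩, hx | hx⟩ | ⟨u, v, e, hZ₁, hZ₂, hu | hv⟩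
  · exact disjoint_left.mp sep₁.2.1 hx hx₁
  · exact disjoint_left.mp sep₂.2.1 hx hx₂
  · exact hedge u v e hZ₁ hZ₂ hu
  · exact hedge v u e.symm hZ₁.symm hZ₂.symm hv

theorem IsMinimalIn.le_ncard_cornerBoundary (hT : IsTangle G k T)
    (h₁ : IsMinimalIn T (Y₁, S₁, Z₁)) (h₂ : (Y₂, S₂, Z₂) ∈ T) {x : V} (hx₂ : x ∈ Y₂)
    (hx₁ : x ∉ Y₁) :
    k ≤ (cornerBoundary Z₁ S₁ Z₂ S₂).ncard := by
  by_contra! hk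
  have sep₁ : IsSeparation G Y₁ S₁ Z₁ := (hT.1 _ h₁.1).1
  have sep₂ : IsSeparation G Y₂ S₂ Z₂ := (hT.1 _ h₂).1
  have hcorner := hT.corner_mem h₁.1 h₂ hk
  have hx : x ∈ S₁ ∪ Z₁ := by rcases sep₁.mem_cases x with h | h | h <;> simp_all
  have hx' : x ∉ cornerBoundary Z₁ S₁ Z₂ S₂ ∪ Z₁ ∩ Z₂ := by
    rcases sep₂.mem_cases x with h | h | h <;> simp_all [cornerBoundary]
  have hsub : cornerBoundary Z₁ S₁ Z₂ S₂ ∪ Z₁ ∩ Z₂ ⊆ S₁ ∪ Z₁ := by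
    intro y
    simp only [cornerBoundary, mem_union, mem_inter_iff]
    tauto
  have heq := h₁.2 _ hcorner (Or.inl (ssubset_of_subset_not_subset hsub fun h => hx' (h hx)))
  simp only [Prod.mk.injEq] at heq
  exact hx' (by rwa [heq.2.1, heq.2.2])

theorem IsMinimalIn.disjoint_fst_of_ne [Finite V] (hT : IsTangle G (k + 1) T)
    (hk : KConnected k G) (h₁ : IsMinimalIn T (Y₁, S₁, Z₁)) (h₂ : IsMinimalIn T (Y₂, S₂, Z₂))
    (hne : (Y₁, S₁, Z₁) ≠ (Y₂, S₂, Z₂)) : Disjoint Y₁ Y₂ := by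
  by_contra hmeet
  obtain ⟨s, hs₁, hs₂⟩ := not_disjoint_iff.mp hmeet
  have sep₁ : IsSeparation G Y₁ S₁ Z₁ := (hT.1 _ h₁.1).1
  have sep₂ : IsSeparation G Y₂ S₂ Z₂ := (hT.1 _ h₂.1).1
  have hS₁ := hT.ncard_eq hk h₁.1 ⟨s, hs₁⟩
  have hS₂ := hT.ncard_eq hk h₂.1 ⟨s, hs₂⟩
  have hY : k ≤ (cornerBoundary Y₁ S₁ Y₂ S₂).ncard :=
    hk.2 _ _ _ (sep₁.corner sep₂) ⟨s, hs₁, hs₂⟩ ((hT.2.2.2 _ h₁.1).mono subset_union_left)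
  have hsum := ncard_cornerBoundary_add_ncard_cornerBoundary sep₁ sep₂
  by_cases hYY : Y₁ = Y₂
  · subst hYY
    have hinter : cornerBoundary Y₁ S₁ Y₁ S₂ = S₁ ∩ S₂ := by
      ext x
      rcases sep₁.mem_cases x with h | h | h <;> rcases sep₂.mem_cases x with h' | h' | h' <;>
        simp_all [cornerBoundary]
    rw [hinter] at hY
    have hS : S₁ = S₂ :=
      (eq_of_subset_of_ncard_le inter_subset_left (by omega)).symm.trans
        (eq_of_subset_of_ncard_le inter_subset_right (by omega))
    subst hS
    exact hne (by rw [sep₁.right_unique sep₂])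
  · have hZ : k + 1 ≤ (cornerBoundary Z₁ S₁ Z₂ S₂).ncard := by
      by_cases hsub : Y₂ ⊆ Y₁
      · obtain ⟨x, hx₁, hx₂⟩ := not_subset.mp fun h => hYY (h.antisymm hsub)
        rw [cornerBoundary_comm]
        exact h₂.le_ncard_cornerBoundary hT h₁.1 hx₁ hx₂
      · obtain ⟨x, hx₂, hx₁⟩ := not_subset.mp hsub
        exact h₁.le_ncard_cornerBoundary hT h₂.1 hx₂ hx₁
    omega

theorem IsMinimalIn.disjoint_separators [Finite V] (hT : IsTangle G 4 T) {Y' S' Z' : Set V}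
    (h : IsMinimalIn T (Y, S, Z)) (h' : (Y', S', Z') ∈ T) {a b : V} (ha : a ∈ S ∩ Y')
    (hb : b ∈ S' ∩ Y) : Disjoint S S' := by
  refine disjoint_left.mpr fun t htS htS' => ?_
  have sep : IsSeparation G Y S Z := (hT.1 _ h.1).1
  have sep' : IsSeparation G Y' S' Z' := (hT.1 _ h').1
  have hZ := h.le_ncard_cornerBoundary hT h' ha.2 (disjoint_right.mp sep.1 ha.1)
  have hsum := ncard_cornerBoundary_add_ncard_cornerBoundary sep sep'
  have hS : S.ncard < 4 := (hT.1 _ h.1).2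
  have hS' : S'.ncard < 4 := (hT.1 _ h').2
  have hsub : ({a, t, b} : Set V) ⊆ cornerBoundary Y S Y' S' := by
    rintro x (rfl | rfl | rfl)
    exacts [Or.inl (Or.inl ha), Or.inl (Or.inr ⟨htS, htS'⟩), Or.inr hb]
  have hcard : ({a, t, b} : Set V).ncard = 3 :=
    ncard_eq_three.mpr ⟨a, t, b, sep'.1.ne_of_mem ha.2 htS', sep.1.symm.ne_of_mem ha.1 hb.2,
      sep.1.symm.ne_of_mem htS hb.2, rfl⟩
  have := ncard_le_ncard hsub
  omega

end Tangles

section Crossedges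

variable [Finite V] {G : SimpleGraph V} {Y S Z Y₁ S₁ Z₁ Y₂ S₂ Z₂ : Set V} {s₁ s₂ : V}

theorem isIndependent_of_inter_eq_singleton (sep₁ : IsSeparation G Y₁ S₁ Z₁)
    (sep₂ : IsSeparation G Y₂ S₂ Z₂) (hS : S.ncard ≤ 3) (hs₁ : S ∩ Y₁ = {s₁})
    (hs₂ : S ∩ Y₂ = {s₂}) (hSS₁ : Disjoint S S₁) (hSS₂ : Disjoint S S₂) (hne : s₁ ≠ s₂) :
    ∀ u ∈ S, ∀ v ∈ S, ¬ G.Adj u v := by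
  have hrest : (S \ {s₁, s₂}).ncard ≤ 1 := by
    have hpair : {s₁, s₂} ⊆ S := pair_subset (eq_singleton_iff_unique_mem.mp hs₁).1.1
      (eq_singleton_iff_unique_mem.mp hs₂).1.1
    rw [ncard_sdiff hpair, ncard_pair hne]
    omega
  have hmem : ∀ u ∈ S, ∀ v ∈ S, G.Adj u v → u ∈ S \ {s₁, s₂} := by
    rintro u hu v hv e
    refine ⟨hu, ?_⟩
    rintro (rfl | rfl)
    exacts [sep₁.not_adj_of_inter_eq_singleton hs₁ hSS₁ hv e,
      sep₂.not_adj_of_inter_eq_singleton hs₂ hSS₂ hv e]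
  intro u hu v hv e
  exact e.ne ((ncard_le_one).mp hrest u (hmem u hu v hv e) v (hmem v hv u hu e.symm))

theorem ne_of_inter_eq_singleton (h3 : KConnected 3 G) (sep : IsSeparation G Y S Z)
    (sep₁ : IsSeparation G Y₁ S₁ Z₁) (sep₂ : IsSeparation G Y₂ S₂ Z₂) (hZ : Z.Nonempty)
    (hS : S.ncard ≤ 3) (hY : 1 < Y.ncard) (hYY₁ : Disjoint Y Y₁) (hYY₂ : Disjoint Y Y₂)
    (hs₁ : s₁ ∈ S ∩ Y₁) (hs₂ : s₂ ∈ S ∩ Y₂) (hne : s₁ ≠ s₂) {b₁ b₂ : V}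
    (hb₁ : S₁ ∩ Y = {b₁}) (hb₂ : S₂ ∩ Y = {b₂}) : b₁ ≠ b₂ := by
  rintro rfl
  have hbY : b₁ ∈ Y := (eq_singleton_iff_unique_mem.mp hb₁).1.2
  have hZside : ∀ {Y' S' Z'}, IsSeparation G Y' S' Z' → Disjoint Y Y' → S' ∩ Y = {b₁} →
      ∀ a ∈ Y \ {b₁}, a ∈ Z' := by
    intro Y' S' Z' sep' hYY' hb a ⟨haY, hab⟩
    exact sep'.mem_right (disjoint_left.mp hYY' haY) fun haS' =>
      hab ((eq_singleton_iff_unique_mem.mp hb).2 a ⟨haS', haY⟩)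
  have hsep : IsSeparation G (Y \ {b₁}) (insert b₁ (S \ {s₁, s₂}))
      (Y \ {b₁} ∪ insert b₁ (S \ {s₁, s₂}))ᶜ := by
    refine isSeparation_of_forall_adj ?_ fun a ha c e => ?_
    · refine disjoint_left.mpr fun x hxA hxB => ?_
      rcases hxB with rfl | ⟨hxS, -⟩
      exacts [hxA.2 rfl, disjoint_left.mp sep.1 hxA.1 hxS]
    have hcY₁ : c ∉ Y₁ := fun hc => sep₁.2.2.2.2 c hc a (hZside sep₁ hYY₁ hb₁ a ha) e.symm
    have hcY₂ : c ∉ Y₂ := fun hc => sep₂.2.2.2.2 c hc a (hZside sep₂ hYY₂ hb₂ a ha) e.symm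
    rcases sep.mem_cases c with ⟨hc, -⟩ | ⟨-, hc, -⟩ | ⟨-, -, hc⟩
    · by_cases hcb : c = b₁
      exacts [Or.inr (Or.inl hcb), Or.inl ⟨hc, hcb⟩]
    · refine Or.inr (Or.inr ⟨hc, ?_⟩)
      rintro (rfl | rfl)
      exacts [hcY₁ hs₁.2, hcY₂ hs₂.2]
    · exact (sep.2.2.2.2 a ha.1 c hc e).elim
  have hA : (Y \ {b₁}).Nonempty := by
    apply nonempty_of_ncard_ne_zero
    rw [ncard_sdiff_singleton_of_mem hbY]
    omega
  obtain ⟨z, hz⟩ := hZ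
  have hC : z ∈ (Y \ {b₁} ∪ insert b₁ (S \ {s₁, s₂}))ᶜ := by
    rintro (⟨hzY, -⟩ | rfl | ⟨hzS, -⟩)
    exacts [disjoint_left.mp sep.2.1 hzY hz, disjoint_left.mp sep.2.1 hbY hz,
      disjoint_left.mp sep.2.2.1 hzS hz]
  have h3le := h3.2 _ _ _ hsep hA ⟨z, hC⟩
  have hle := ncard_insert_le b₁ (S \ {s₁, s₂})
  rw [ncard_sdiff (pair_subset hs₁.1 hs₂.1), ncard_pair hne] at hle
  omega

end Crossedges

theorem statement16_general {V : Type*} (G : SimpleGraph V)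
    (h3 : KConnected 3 G) (T : Set (Set V × Set V × Set V)) (hT : IsTangle G 4 T)
    (Y S Z Y₁ S₁ Z₁ Y₂ S₂ Z₂ : Set V)
    (h : IsMinimalIn T (Y, S, Z))
    (h₁ : IsMinimalIn T (Y₁, S₁, Z₁)) (h₂ : IsMinimalIn T (Y₂, S₂, Z₂))
    (hd₁ : (Y, S, Z) ≠ (Y₁, S₁, Z₁)) (hd₂ : (Y, S, Z) ≠ (Y₂, S₂, Z₂))
    (hd₁₂ : (Y₁, S₁, Z₁) ≠ (Y₂, S₂, Z₂))
    (s₁ s₂ s₁' s₂' : V)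
    (hs₁ : S ∩ Y₁ = {s₁}) (hs₁' : S₁ ∩ Y = {s₁'})
    (hs₂ : S ∩ Y₂ = {s₂}) (hs₂' : S₂ ∩ Y = {s₂'}) :
    (∀ u ∈ S, ∀ v ∈ S, ¬ G.Adj u v) ∧
    (Degenerate G Y S Z → (s₁ ≠ s₂ ∧ s₁ ≠ s₁' ∧ s₂ ≠ s₁') ∧ s₁' = s₂') ∧
    (¬ Degenerate G Y S Z →
      s₁ ≠ s₂ ∧ s₁ ≠ s₁' ∧ s₁ ≠ s₂' ∧ s₂ ≠ s₁' ∧ s₂ ≠ s₂' ∧ s₁' ≠ s₂') := by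
  have : Finite V := Nat.finite_of_card_ne_zero (by have := h3.1; omega)
  have sep : IsSeparation G Y S Z := (hT.1 _ h.1).1
  have sep₁ : IsSeparation G Y₁ S₁ Z₁ := (hT.1 _ h₁.1).1
  have sep₂ : IsSeparation G Y₂ S₂ Z₂ := (hT.1 _ h₂.1).1
  have hS : S.ncard ≤ 3 := Nat.lt_succ_iff.mp (hT.1 _ h.1).2
  obtain ⟨⟨hs₁S, hs₁Y₁⟩, -⟩ := eq_singleton_iff_unique_mem.mp hs₁
  obtain ⟨⟨hs₂S, hs₂Y₂⟩, -⟩ := eq_singleton_iff_unique_mem.mp hs₂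
  obtain ⟨⟨hs₁'S₁, hs₁'Y⟩, -⟩ := eq_singleton_iff_unique_mem.mp hs₁'
  obtain ⟨⟨hs₂'S₂, hs₂'Y⟩, -⟩ := eq_singleton_iff_unique_mem.mp hs₂'
  have hSY {s s' : V} (hs : s ∈ S) (hs' : s' ∈ Y) : s ≠ s' := sep.1.symm.ne_of_mem hs hs'
  have hs₁₂ : s₁ ≠ s₂ := (h₁.disjoint_fst_of_ne hT h3 h₂ hd₁₂).ne_of_mem hs₁Y₁ hs₂Y₂
  have hSS₁ : Disjoint S S₁ := h.disjoint_separators hT h₁.1 ⟨hs₁S, hs₁Y₁⟩ ⟨hs₁'S₁, hs₁'Y⟩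
  have hSS₂ : Disjoint S S₂ := h.disjoint_separators hT h₂.1 ⟨hs₂S, hs₂Y₂⟩ ⟨hs₂'S₂, hs₂'Y⟩
  have indep := isIndependent_of_inter_eq_singleton sep₁ sep₂ hS hs₁ hs₂ hSS₁ hSS₂ hs₁₂
  refine ⟨indep, fun hdeg => ⟨⟨hs₁₂, hSY hs₁S hs₁'Y, hSY hs₂S hs₁'Y⟩, ?_⟩, fun hnd => ⟨hs₁₂,
    hSY hs₁S hs₁'Y, hSY hs₁S hs₂'Y, hSY hs₂S hs₁'Y, hSY hs₂S hs₂'Y, ?_⟩⟩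
  · exact (ncard_le_one).mp hdeg.1.le _ hs₁'Y _ hs₂'Y
  · have hY : 1 < Y.ncard := by
      have := (ncard_pos).mpr ⟨s₁', hs₁'Y⟩
      have : Y.ncard ≠ 1 := fun hY => hnd ⟨hY, indep⟩
      omega
    exact ne_of_inter_eq_singleton h3 sep sep₁ sep₂ (hT.2.2.2 _ h.1) hS hY
      (h.disjoint_fst_of_ne hT h3 h₁ hd₁) (h.disjoint_fst_of_ne hT h3 h₂ hd₂) ⟨hs₁S, hs₁Y₁⟩
      ⟨hs₂S, hs₂Y₂⟩ hs₁₂ hs₁' hs₂'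

/-- Crossedge Independence Lemma. -/
theorem statement16 {V : Type*} [Fintype V] (G : SimpleGraph V)
    (h3 : KConnected 3 G) (T : Set (Set V × Set V × Set V)) (hT : IsTangle G 4 T)
    (Y S Z Y₁ S₁ Z₁ Y₂ S₂ Z₂ : Set V)
    (h : IsMinimalIn T (Y, S, Z))
    (h₁ : IsMinimalIn T (Y₁, S₁, Z₁)) (h₂ : IsMinimalIn T (Y₂, S₂, Z₂))
    (hd₁ : (Y, S, Z) ≠ (Y₁, S₁, Z₁)) (hd₂ : (Y, S, Z) ≠ (Y₂, S₂, Z₂))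
    (hd₁₂ : (Y₁, S₁, Z₁) ≠ (Y₂, S₂, Z₂))
    (hc₁ : ¬ SepOrthogonal (Y, S, Z) (Y₁, S₁, Z₁))
    (hc₂ : ¬ SepOrthogonal (Y, S, Z) (Y₂, S₂, Z₂))
    (s₁ s₂ s₁' s₂' : V)
    (he₁ : G.Adj s₁ s₁') (he₂ : G.Adj s₂ s₂')
    (hs₁ : S ∩ Y₁ = {s₁}) (hs₁' : S₁ ∩ Y = {s₁'})
    (hs₂ : S ∩ Y₂ = {s₂}) (hs₂' : S₂ ∩ Y = {s₂'}) :
    (∀ u ∈ S, ∀ v ∈ S, ¬ G.Adj u v) ∧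
    (Degenerate G Y S Z → (s₁ ≠ s₂ ∧ s₁ ≠ s₁' ∧ s₂ ≠ s₁') ∧ s₁' = s₂') ∧
    (¬ Degenerate G Y S Z →
      s₁ ≠ s₂ ∧ s₁ ≠ s₁' ∧ s₁ ≠ s₂' ∧ s₂ ≠ s₁' ∧ s₂ ≠ s₂' ∧ s₁' ≠ s₂') :=
  statement16_general G h3 T hT Y S Z Y₁ S₁ Z₁ Y₂ S₂ Z₂ h h₁ h₂ hd₁ hd₂ hd₁₂ s₁ s₂ s₁' s₂' hs₁ hs₁'
    hs₂ hs₂'
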